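/- Let α ≥ 1 and let λ be a partition with at most n parts (l(λ) ≤ n). Then |A^α_λ(2n) - 1| ≤ ((α-1)/n)·|λ|, where A^α_λ(m) = ∏_{(i,j)∈λ} (1 - (α-1)/(m + jα - i)), the product running over cells (i,j) of λ with 1 ≤ i, 1 ≤ j ≤ λ_i, and |λ| = ∑_i λ_i. -/
import Mathlib


open Finset

/-- The coefficient `A^α_λ(m) = ∏_{(i,j)∈λ} (1 - (α-1)/(m + jα - i))`.
The partition is encoded as an antitone function `p : ℕ → ℕ` (0-indexed parts),
cells `(i,j)` with `1 ≤ i`, `1 ≤ j ≤ λ_i` correspond to `i = i'+1`, `j = j'+1`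
with `i' < n`, `j' < p i'`. -/
noncomputable def jackCoeffA (α : ℝ) (p : ℕ → ℕ) (n m : ℕ) : ℝ :=
  ∏ i ∈ Finset.range n, ∏ j ∈ Finset.range (p i),
    (1 - (α - 1) / ((m : ℝ) + (j + 1 : ℕ) * α - (i + 1 : ℕ)))

lemma one_sub_sum_le_prod_one_sub' {ι : Type*} (s : Finset ι) (f : ι → ℝ)
    (h0 : ∀ i ∈ s, 0 ≤ f i) (h1 : ∀ i ∈ s, f i ≤ 1) :
    1 - ∑ i ∈ s, f i ≤ ∏ i ∈ s, (1 - f i) := by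
  induction s using Finset.cons_induction with
  | empty => simp
  | cons a s ha ih =>
    rw [Finset.prod_cons, Finset.sum_cons]
    have h0a := h0 a (Finset.mem_cons_self a s)
    have h1a := h1 a (Finset.mem_cons_self a s)
    have ih' := ih (fun i hi => h0 i (Finset.mem_cons_of_mem hi))
      (fun i hi => h1 i (Finset.mem_cons_of_mem hi))
    have hs : ∑ i ∈ s, f i ≥ 0 := Finset.sum_nonneg fun i hi => h0 i (Finset.mem_cons_of_mem hi)
    nlinarith [ih']

/-- If `α ≥ 1` and `λ` is a partition with at most `n` parts, then
`|A^α_λ(2n) - 1| ≤ ((α-1)/n)·|λ|`. -/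
theorem abs_jackCoeffA_sub_one_le (α : ℝ) (hα : 1 ≤ α) (n : ℕ) (hn : 0 < n)
    (p : ℕ → ℕ) (hanti : Antitone p) (hlen : ∀ i, n ≤ i → p i = 0) :
    |jackCoeffA α p n (2 * n) - 1| ≤ (α - 1) / n * (∑ i ∈ Finset.range n, (p i : ℝ)) := by
  set f : (Σ _ : ℕ, ℕ) → ℝ := fun x =>
    (α - 1) / ((2 * n : ℕ) + (x.2 + 1 : ℕ) * α - (x.1 + 1 : ℕ)) with hf
  set s : Finset (Σ _ : ℕ, ℕ) := (Finset.range n).sigma (fun i => Finset.range (p i)) with hs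
  have hnR : (0 : ℝ) < n := by exact_mod_cast hn
  have hden : ∀ x ∈ s, (n : ℝ) + (α - 1) ≤ (2 * n : ℕ) + (x.2 + 1 : ℕ) * α - (x.1 + 1 : ℕ) := by
    rintro ⟨i, j⟩ hx
    rw [Finset.mem_sigma, Finset.mem_range, Finset.mem_range] at hx
    have hi : (i : ℝ) + 1 ≤ n := by exact_mod_cast hx.1
    have hj : (1 : ℝ) ≤ (j + 1 : ℕ) := by exact_mod_cast Nat.succ_le_succ (Nat.zero_le j)
    have : ((j : ℝ) + 1) * α ≥ 1 := le_trans hα (le_mul_of_one_le_left (by linarith) (by linarith))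
    push_cast
    nlinarith
  have hfle : ∀ x ∈ s, f x ≤ (α - 1) / n := by
    intro x hx
    exact div_le_div_of_nonneg_left (by linarith) hnR (by linarith [hden x hx])
  have hf0 : ∀ x ∈ s, 0 ≤ f x := fun x hx =>
    div_nonneg (by linarith) (by linarith [hden x hx])
  have hf1 : ∀ x ∈ s, f x ≤ 1 := by
    intro x hx
    refine (div_le_one (by linarith [hden x hx])).2 (by linarith [hden x hx])
  have hprod : jackCoeffA α p n (2 * n) = ∏ x ∈ s, (1 - f x) := by
    rw [jackCoeffA, hs, Finset.prod_sigma]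
  have hsum : ∑ x ∈ s, f x ≤ (α - 1) / n * (∑ i ∈ Finset.range n, (p i : ℝ)) := by
    calc ∑ x ∈ s, f x ≤ ∑ x ∈ s, (α - 1) / n := Finset.sum_le_sum hfle
    _ = (α - 1) / n * (∑ i ∈ Finset.range n, (p i : ℝ)) := by
        rw [Finset.sum_const, hs, Finset.card_sigma]
        simp [Finset.card_range, mul_comm]
  have hle1 : ∏ x ∈ s, (1 - f x) ≤ 1 :=
    Finset.prod_le_one (fun x hx => by linarith [hf1 x hx]) (fun x hx => by linarith [hf0 x hx])
  have hge : 1 - ∑ x ∈ s, f x ≤ ∏ x ∈ s, (1 - f x) :=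
    one_sub_sum_le_prod_one_sub' s f hf0 hf1
  rw [hprod, abs_sub_le_iff]
  constructor <;> linarith
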